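/- arXiv:1610.04702 — 3 statements merged into one kernel-verified Lean document; each statement's English description precedes it below -/
import Mathlib

section
/- Under the network, strong-convexity and bounded-stochastic-subgradient assumptions below, let the DSMD iterates be generated by ∇Φ(y_{i,t}) = ∇Φ(x_{i,t}) − η_t ĝ_{i,t}, z_{i,t+1} = argmin_{x∈X} D_Φ(x‖y_{i,t}), x_{i,t+1} = Σ_{j=1}^m [A(t)]_{ij} z_{j,t+1}, with positive step sizes η_t. Then for every node j and horizon T, Σ_{t=1}^T Σ_{i=1}^m E[‖x_{i,t} − x_{j,t}‖₂] ≤ m(2αβ/(1−β) + 1) Σ_{i=1}^m E[‖x_{i,1}‖₂] + (2αβm²G/((1−β)σ_Φ)) Σ_{t=1}^T η_t. -/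
open MeasureTheory Finset
open scoped RealInnerProductSpace

/-- Bregman divergence `D_Φ(u‖v) = Φ(u) − Φ(v) − ⟨∇Φ(v), u − v⟩`. -/
noncomputable def breg {d : ℕ} (Φ : EuclideanSpace ℝ (Fin d) → ℝ)
    (Φ' : EuclideanSpace ℝ (Fin d) → EuclideanSpace ℝ (Fin d))
    (u v : EuclideanSpace ℝ (Fin d)) : ℝ :=
  Φ u - Φ v - ⟪Φ' v, u - v⟫

/-- `matProd A ℓ n` is the backward matrix product `A(ℓ+n) A(ℓ+n-1) ⋯ A(ℓ)`,
so that the transition matrix `A(t:ℓ)` equals `matProd A ℓ (t - ℓ)` for `t ≥ ℓ`. -/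
def matProd {m : ℕ} (A : ℕ → Matrix (Fin m) (Fin m) ℝ) (ℓ : ℕ) : ℕ → Matrix (Fin m) (Fin m) ℝ
  | 0 => A ℓ
  | n + 1 => A (ℓ + n + 1) * matProd A ℓ n

lemma real_le_of_forall_pos_le_add' {a b : ℝ} (h : ∀ ε : ℝ, 0 < ε → a ≤ b + ε) : a ≤ b := by
  by_contra hc
  push_neg at hc
  have := h ((a - b) / 2) (by linarith)
  linarith

section Aux
variable {d : ℕ}

lemma strong_min_aux (X : Set (EuclideanSpace ℝ (Fin d))) (hXconv : Convex ℝ X)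
    (Φ : EuclideanSpace ℝ (Fin d) → ℝ) (Φ' : EuclideanSpace ℝ (Fin d) → EuclideanSpace ℝ (Fin d))
    (σΦ : ℝ) (hσ : 0 < σΦ)
    (hsc : ∀ u v : EuclideanSpace ℝ (Fin d),
      Φ u ≥ Φ v + ⟪Φ' v, u - v⟫ + σΦ / 2 * ‖u - v‖ ^ 2)
    (c w : EuclideanSpace ℝ (Fin d)) (hw : w ∈ X)
    (hmin : ∀ u ∈ X, Φ w - ⟪c, w⟫ ≤ Φ u - ⟪c, u⟫)
    (u : EuclideanSpace ℝ (Fin d)) (hu : u ∈ X) :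
    Φ w - ⟪c, w⟫ + σΦ / 2 * ‖u - w‖ ^ 2 ≤ Φ u - ⟪c, u⟫ := by
  set K : ℝ := ‖u - w‖ ^ 2 with hK
  have hK0 : 0 ≤ K := sq_nonneg _
  have hstep : ∀ lam : ℝ, 0 < lam → lam ≤ 1 →
      σΦ / 2 * (1 - lam) * K ≤ (Φ u - ⟪c, u⟫) - (Φ w - ⟪c, w⟫) := by
    intro lam hl0 hl1
    set p : EuclideanSpace ℝ (Fin d) := w + lam • (u - w) with hp
    have hpX : p ∈ X := by
      have h := hXconv hw hu (by linarith : (0:ℝ) ≤ 1 - lam) (le_of_lt hl0) (by ring)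
      have heq : (1 - lam) • w + lam • u = p := by
        simp only [hp]; module
      rwa [heq] at h
    have hup : u - p = (1 - lam) • (u - w) := by simp only [hp]; module
    have hwp : w - p = (-lam) • (u - w) := by simp only [hp]; module
    set I : ℝ := ⟪Φ' p, u - w⟫ with hI
    have h1 : Φ p + (1 - lam) * I + σΦ / 2 * ((1 - lam) ^ 2 * K) ≤ Φ u := by
      have h := hsc u p
      rw [hup, real_inner_smul_right, norm_smul] at h
      have hn : ‖(1:ℝ) - lam‖ = 1 - lam := by
        rw [Real.norm_eq_abs, abs_of_nonneg]; linarith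
      rw [hn] at h
      have he2 : ((1 - lam) * ‖u - w‖) ^ 2 = (1 - lam) ^ 2 * K := by rw [hK]; ring
      rw [he2] at h
      linarith
    have h2 : Φ p + (-lam) * I + σΦ / 2 * (lam ^ 2 * K) ≤ Φ w := by
      have h := hsc w p
      rw [hwp, real_inner_smul_right, norm_smul] at h
      have hn : ‖(-lam : ℝ)‖ = lam := by
        rw [Real.norm_eq_abs, abs_of_nonpos (by linarith)]; ring
      rw [hn] at h
      have he2 : (lam * ‖u - w‖) ^ 2 = lam ^ 2 * K := by rw [hK]; ring
      rw [he2] at h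
      linarith
    have hcp : ⟪c, p⟫ = ⟪c, w⟫ + lam * (⟪c, u⟫ - ⟪c, w⟫) := by
      simp only [hp, inner_add_right, real_inner_smul_right, inner_sub_right]
    have hminp := hmin p hpX
    have hcomb : Φ p + σΦ / 2 * (lam * (1 - lam) * K) ≤ lam * Φ u + (1 - lam) * Φ w := by
      nlinarith [mul_le_mul_of_nonneg_left h1 (le_of_lt hl0),
        mul_le_mul_of_nonneg_left h2 (by linarith : (0:ℝ) ≤ 1 - lam)]
    have hfin : lam * (σΦ / 2 * (1 - lam) * K) ≤ lam * ((Φ u - ⟪c, u⟫) - (Φ w - ⟪c, w⟫)) := by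
      nlinarith [hminp, hcomb, hcp]
    exact le_of_mul_le_mul_left hfin hl0
  have hfa : ∀ ε : ℝ, 0 < ε → σΦ / 2 * K ≤ (Φ u - ⟪c, u⟫) - (Φ w - ⟪c, w⟫) + ε := by
    intro ε hε
    set lam : ℝ := min 1 (ε / (σΦ / 2 * K + 1)) with hlam
    have hden : 0 < σΦ / 2 * K + 1 := by positivity
    have hl0 : 0 < lam := lt_min one_pos (div_pos hε hden)
    have hl1 : lam ≤ 1 := min_le_left _ _
    have hstep' := hstep lam hl0 hl1
    have hsmall : σΦ / 2 * lam * K ≤ ε := by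
      have h1 : lam ≤ ε / (σΦ / 2 * K + 1) := min_le_right _ _
      have h2 : σΦ / 2 * K ≤ σΦ / 2 * K + 1 := by linarith
      calc σΦ / 2 * lam * K = lam * (σΦ / 2 * K) := by ring
        _ ≤ (ε / (σΦ / 2 * K + 1)) * (σΦ / 2 * K + 1) := by
            apply mul_le_mul h1 h2 (by positivity) (by positivity)
        _ = ε := by field_simp
    nlinarith [hstep']
  have := real_le_of_forall_pos_le_add' hfa
  linarith

lemma mirror_bound (X : Set (EuclideanSpace ℝ (Fin d))) (hXconv : Convex ℝ X)
    (Φ : EuclideanSpace ℝ (Fin d) → ℝ) (Φ' : EuclideanSpace ℝ (Fin d) → EuclideanSpace ℝ (Fin d))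
    (σΦ : ℝ) (hσ : 0 < σΦ)
    (hsc : ∀ u v : EuclideanSpace ℝ (Fin d),
      Φ u ≥ Φ v + ⟪Φ' v, u - v⟫ + σΦ / 2 * ‖u - v‖ ^ 2)
    (xx yy w g : EuclideanSpace ℝ (Fin d)) (ηt : ℝ) (hηt : 0 < ηt)
    (hxX : xx ∈ X) (hwX : w ∈ X)
    (hmin : IsMinOn (fun u => breg Φ Φ' u yy) X w)
    (hgrad : Φ' yy = Φ' xx - ηt • g) :
    ‖w - xx‖ ≤ ηt * ‖g‖ / σΦ := by
  have hmin' : ∀ u ∈ X, Φ w - ⟪Φ' yy, w⟫ ≤ Φ u - ⟪Φ' yy, u⟫ := by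
    intro u hu
    have h := hmin hu
    simp only [breg, inner_sub_right, Set.mem_setOf_eq] at h
    linarith
  have h1 := strong_min_aux X hXconv Φ Φ' σΦ hσ hsc (Φ' yy) w hwX hmin' xx hxX
  have h2 := hsc w xx
  have hdiff : (⟪Φ' xx, w - xx⟫ : ℝ) - ⟪Φ' yy, w - xx⟫ = ηt * ⟪g, w - xx⟫ := by
    rw [hgrad]
    simp only [inner_sub_left, real_inner_smul_left]
    ring
  set r : ℝ := ‖w - xx‖ with hr
  have hnorm : ‖xx - w‖ = r := norm_sub_rev _ _
  have hr0 : 0 ≤ r := norm_nonneg _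
  have hkey : σΦ * r ^ 2 ≤ ηt * ⟪g, xx - w⟫ := by
    have hcw : (⟪Φ' yy, w - xx⟫ : ℝ) = ⟪Φ' yy, w⟫ - ⟪Φ' yy, xx⟫ := inner_sub_right _ _ _
    have hfw : (⟪Φ' xx, w - xx⟫ : ℝ) = ⟪Φ' xx, w⟫ - ⟪Φ' xx, xx⟫ := inner_sub_right _ _ _
    have hgwx : (⟪g, xx - w⟫ : ℝ) = - ⟪g, w - xx⟫ := by
      rw [← inner_neg_right]; congr 1; abel
    rw [hgwx]
    rw [hnorm] at h1
    nlinarith [h1, h2, hdiff]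
  have hCS : (⟪g, xx - w⟫ : ℝ) ≤ ‖g‖ * ‖xx - w‖ := real_inner_le_norm _ _
  rw [hnorm] at hCS
  rcases eq_or_lt_of_le hr0 with h0 | h0
  · rw [← h0]; positivity
  · rw [le_div_iff₀ hσ]
    nlinarith [hkey, mul_le_mul_of_nonneg_left hCS (le_of_lt hηt), h0]
end Aux

lemma unroll_lemma {d m : ℕ} (A : ℕ → Matrix (Fin m) (Fin m) ℝ)
    (xs zs : Fin m → ℕ → EuclideanSpace ℝ (Fin d))
    (hx : ∀ i t, 1 ≤ t → xs i (t+1) = ∑ j, A t i j • zs j (t+1)) :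
    ∀ n (i : Fin m), xs i (n+2) = (∑ k, matProd A 1 n i k • xs k 1)
      + ∑ s ∈ Icc 1 (n+1), ∑ k, matProd A s (n+1-s) i k • (zs k (s+1) - xs k s) := by
  intro n
  induction n with
  | zero =>
    intro i
    rw [show (0:ℕ)+2 = 1+1 from rfl, hx i 1 le_rfl]
    rw [Finset.Icc_self, Finset.sum_singleton, ← Finset.sum_add_distrib]
    apply Finset.sum_congr rfl
    intro k _
    show A 1 i k • zs k 2 = A 1 i k • xs k 1 + A 1 i k • (zs k 2 - xs k 1)
    rw [smul_sub]; abel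
  | succ n ih =>
    intro i
    have h := hx i (n+2) (by omega)
    rw [show n+1+2 = n+2+1 from rfl, h]
    have split : ∑ j, A (n+2) i j • zs j (n+2+1)
        = (∑ j, A (n+2) i j • xs j (n+2))
          + ∑ j, A (n+2) i j • (zs j (n+2+1) - xs j (n+2)) := by
      rw [← Finset.sum_add_distrib]
      apply Finset.sum_congr rfl
      intro j _
      rw [smul_sub]; abel
    have main : (∑ j, A (n+2) i j • xs j (n+2))
        = (∑ k, matProd A 1 (n+1) i k • xs k 1)
          + ∑ s ∈ Icc 1 (n+1), ∑ k, matProd A s (n+2-s) i k • (zs k (s+1) - xs k s) := by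
      calc ∑ j, A (n+2) i j • xs j (n+2)
          = ∑ j, A (n+2) i j • ((∑ k, matProd A 1 n j k • xs k 1)
            + ∑ s ∈ Icc 1 (n+1), ∑ k, matProd A s (n+1-s) j k • (zs k (s+1) - xs k s)) :=
            Finset.sum_congr rfl fun j _ => by rw [ih j]
        _ = (∑ j, ∑ k, (A (n+2) i j * matProd A 1 n j k) • xs k 1)
            + ∑ j, ∑ s ∈ Icc 1 (n+1), ∑ k,
                (A (n+2) i j * matProd A s (n+1-s) j k) • (zs k (s+1) - xs k s) := by
            rw [← Finset.sum_add_distrib]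
            apply Finset.sum_congr rfl
            intro j _
            rw [smul_add, Finset.smul_sum, Finset.smul_sum]
            congr 1
            · exact Finset.sum_congr rfl fun k _ => smul_smul _ _ _
            · apply Finset.sum_congr rfl
              intro s _
              rw [Finset.smul_sum]
              exact Finset.sum_congr rfl fun k _ => smul_smul _ _ _
        _ = (∑ k, matProd A 1 (n+1) i k • xs k 1)
            + ∑ s ∈ Icc 1 (n+1), ∑ k, matProd A s (n+2-s) i k • (zs k (s+1) - xs k s) := by
            congr 1
            · rw [Finset.sum_comm]
              apply Finset.sum_congr rfl
              intro k _
              rw [← Finset.sum_smul]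
              congr 1
              rw [show matProd A 1 (n+1) = A (1+n+1) * matProd A 1 n from rfl,
                show 1+n+1 = n+2 by omega, Matrix.mul_apply]
            · rw [Finset.sum_comm]
              apply Finset.sum_congr rfl
              intro s hs
              rw [Finset.sum_comm]
              apply Finset.sum_congr rfl
              intro k _
              rw [← Finset.sum_smul]
              congr 1
              have hs1 := (Finset.mem_Icc.1 hs).1
              have hs2 := (Finset.mem_Icc.1 hs).2
              rw [show n+2-s = (n+1-s)+1 by omega,
                show matProd A s ((n+1-s)+1) = A (s+(n+1-s)+1) * matProd A s (n+1-s) from rfl,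
                show s+(n+1-s)+1 = n+2 by omega, Matrix.mul_apply]
    have last : (∑ j, A (n+2) i j • (zs j (n+2+1) - xs j (n+2)))
        = ∑ k, matProd A (n+2) (n+2-(n+2)) i k • (zs k ((n+2)+1) - xs k (n+2)) := by
      rw [Nat.sub_self]
      rfl
    rw [split, main, last, Finset.sum_Icc_succ_top (by omega : 1 ≤ n+1+1)]
    abel

lemma geo_lemma {β : ℝ} (hβ0 : 0 ≤ β) (hβ1 : β < 1) (s T : ℕ) :
    ∑ t ∈ Icc (s+1) T, β ^ (t - s) ≤ β / (1 - β) := by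
  have h1 : ∀ t ∈ Icc (s+1) T, β ^ (t - s) = β * β ^ (t - (s+1)) := by
    intro t ht
    have h := (Finset.mem_Icc.1 ht).1
    rw [show t - s = (t - (s+1)) + 1 by omega, pow_succ]
    ring
  rw [Finset.sum_congr rfl h1, ← Finset.mul_sum]
  have h2 : ∑ t ∈ Icc (s+1) T, β ^ (t - (s+1)) ≤ 1 / (1 - β) := by
    rw [show Icc (s+1) T = Ico (s+1) (T+1) by rw [Finset.Ico_add_one_right_eq_Icc]]
    rw [Finset.sum_Ico_eq_sum_range]
    have h3 : ∀ i ∈ Finset.range (T + 1 - (s+1)), β ^ (s + 1 + i - (s+1)) = β ^ i := by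
      intro i _
      congr 1
      omega
    rw [Finset.sum_congr rfl h3, one_div]
    have hsum := (summable_geometric_of_lt_one hβ0 hβ1).sum_le_tsum (Finset.range (T + 1 - (s+1)))
      (fun i _ => pow_nonneg hβ0 i)
    rwa [tsum_geometric_of_lt_one hβ0 hβ1] at hsum
  calc β * ∑ t ∈ Icc (s+1) T, β ^ (t - (s+1)) ≤ β * (1 / (1 - β)) :=
        mul_le_mul_of_nonneg_left h2 hβ0
    _ = β / (1 - β) := by ring

lemma swap_tri (f : ℕ → ℕ → ℝ) (T : ℕ) :
    ∑ t ∈ Icc 1 T, ∑ s ∈ Icc 1 (t-1), f t s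
      = ∑ s ∈ Icc 1 T, ∑ t ∈ Icc (s+1) T, f t s := by
  induction T with
  | zero => simp
  | succ T ih =>
    rw [Finset.sum_Icc_succ_top (by omega : 1 ≤ T+1), ih,
      Finset.sum_Icc_succ_top (by omega : 1 ≤ T+1)]
    have h1 : ∑ t ∈ Icc (T+1+1) (T+1), f t (T+1) = 0 := by
      rw [Finset.Icc_eq_empty (by omega)]
      simp
    rw [h1, add_zero, show T+1-1 = T by omega, ← Finset.sum_add_distrib]
    apply Finset.sum_congr rfl
    intro s hs
    have hs2 := (Finset.mem_Icc.1 hs).2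
    rw [Finset.sum_Icc_succ_top (by omega : s+1 ≤ T+1)]

section MomentAux
variable {Ω : Type*} {m0 : MeasurableSpace Ω} {μ : Measure Ω} {d : ℕ}

lemma int_norm_of_sq (g : Ω → EuclideanSpace ℝ (Fin d))
    (h2 : Integrable (fun ω => ‖g ω‖ ^ 2) μ) [IsFiniteMeasure μ] :
    Integrable (fun ω => ‖g ω‖) μ := by
  have hm : AEStronglyMeasurable (fun ω => ‖g ω‖) μ := by
    have h := Real.continuous_sqrt.comp_aestronglyMeasurable h2.aestronglyMeasurable
    simpa [Real.sqrt_sq (norm_nonneg _)] using h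
  apply Integrable.mono' ((integrable_const (1:ℝ)).add h2) hm
  filter_upwards with ω
  rw [Real.norm_eq_abs, abs_of_nonneg (norm_nonneg _)]
  simp only [Pi.add_apply]
  nlinarith [norm_nonneg (g ω), sq_nonneg (‖g ω‖ - 1)]

lemma int_norm_le_of_sq [IsProbabilityMeasure μ] (g : Ω → EuclideanSpace ℝ (Fin d))
    (G : ℝ) (hG : 0 ≤ G) (h2 : Integrable (fun ω => ‖g ω‖ ^ 2) μ)
    (hb : ∫ ω, ‖g ω‖ ^ 2 ∂μ ≤ G ^ 2) :
    ∫ ω, ‖g ω‖ ∂μ ≤ G := by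
  apply real_le_of_forall_pos_le_add'
  intro ε hε
  have hc : 0 < G + ε := by linarith
  have hpt : ∀ ω, ‖g ω‖ ≤ (G+ε)/2 + ‖g ω‖^2 / (2*(G+ε)) := by
    intro ω
    have key : (G+ε)/2 + ‖g ω‖^2/(2*(G+ε)) - ‖g ω‖ = (‖g ω‖ - (G+ε))^2 / (2*(G+ε)) := by
      field_simp
      ring
    nlinarith [div_nonneg (sq_nonneg (‖g ω‖ - (G+ε))) (by linarith : (0:ℝ) ≤ 2*(G+ε)), key]
  have hint : ∫ ω, ‖g ω‖ ∂μ ≤ ∫ ω, ((G+ε)/2 + ‖g ω‖^2/(2*(G+ε))) ∂μ :=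
    integral_mono (int_norm_of_sq g h2) ((integrable_const _).add (h2.div_const _)) hpt
  rw [integral_add (integrable_const _) (h2.div_const _), integral_const, integral_div] at hint
  simp only [probReal_univ, ENNReal.toReal_one, one_smul] at hint
  have h3 : (∫ ω, ‖g ω‖^2 ∂μ) / (2*(G+ε)) ≤ (G+ε)/2 := by
    rw [div_le_iff₀ (by linarith)]
    nlinarith
  linarith
end MomentAux

theorem stmt_2 {d m : ℕ} (hm : 0 < m)
    {Ω : Type*} {m0 : MeasurableSpace Ω} (μ : Measure Ω) [IsProbabilityMeasure μ]
    -- the constraint set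
    (X : Set (EuclideanSpace ℝ (Fin d))) (hXne : X.Nonempty)
    (hXconv : Convex ℝ X) (hXclosed : IsClosed X)
    -- the distance-generating function and its gradient
    (Φ : EuclideanSpace ℝ (Fin d) → ℝ)
    (Φ' : EuclideanSpace ℝ (Fin d) → EuclideanSpace ℝ (Fin d))
    (hΦ : ∀ u, HasGradientAt Φ (Φ' u) u)
    (σΦ : ℝ) (hσΦ : 1 ≤ σΦ)
    (hsc : ∀ u v : EuclideanSpace ℝ (Fin d),
      Φ u ≥ Φ v + ⟪Φ' v, u - v⟫ + σΦ / 2 * ‖u - v‖ ^ 2)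
    -- the doubly stochastic weight matrices and the geometric mixing bound
    (A : ℕ → Matrix (Fin m) (Fin m) ℝ)
    (hnn : ∀ t i j, 0 ≤ A t i j)
    (hrow : ∀ t i, ∑ j, A t i j = 1)
    (hcol : ∀ t j, ∑ i, A t i j = 1)
    (α β : ℝ) (hα : 0 < α) (hβ0 : 0 < β) (hβ1 : β < 1)
    (hprod : ∀ t ℓ : ℕ, 1 ≤ ℓ → ℓ ≤ t → ∀ i j,
      |matProd A ℓ (t - ℓ) i j - 1 / m| ≤ α * β ^ (t - ℓ + 1))
    -- positive step sizes
    (η : ℕ → ℝ) (hη : ∀ t : ℕ, 0 < η t)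
    -- the DSMD iterates
    (x y z : Fin m → ℕ → Ω → EuclideanSpace ℝ (Fin d))
    (gh : Fin m → ℕ → Ω → EuclideanSpace ℝ (Fin d))
    (hx1 : ∀ i ω, x i 1 ω ∈ X)
    (hy : ∀ i, ∀ t : ℕ, 1 ≤ t → ∀ ω, Φ' (y i t ω) = Φ' (x i t ω) - η t • gh i t ω)
    (hzX : ∀ i, ∀ t : ℕ, 1 ≤ t → ∀ ω, z i (t + 1) ω ∈ X)
    (hz : ∀ i, ∀ t : ℕ, 1 ≤ t → ∀ ω,
      IsMinOn (fun u => breg Φ Φ' u (y i t ω)) X (z i (t + 1) ω))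
    (hx : ∀ i, ∀ t : ℕ, 1 ≤ t → ∀ ω, x i (t + 1) ω = ∑ j, A t i j • z j (t + 1) ω)
    -- bounded second moments of the stochastic subgradients
    (G : ℝ) (hG : 0 ≤ G)
    (hg2int : ∀ (i : Fin m) (t : ℕ), Integrable (fun ω => ‖gh i t ω‖ ^ 2) μ)
    (hG2 : ∀ (i : Fin m) (t : ℕ), ∫ ω, ‖gh i t ω‖ ^ 2 ∂μ ≤ G ^ 2)
    (hL1 : ∀ (i : Fin m) (t : ℕ), Integrable (fun ω => ‖x i t ω‖) μ) :
    ∀ (j : Fin m) (T : ℕ),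
      ∑ t ∈ Icc 1 T, ∑ i, ∫ ω, ‖x i t ω - x j t ω‖ ∂μ ≤
        m * (2 * α * β / (1 - β) + 1) * ∑ i, ∫ ω, ‖x i 1 ω‖ ∂μ +
          2 * α * β * m ^ 2 * G / ((1 - β) * σΦ) * ∑ t ∈ Icc 1 T, η t := by
  intro j T
  have hβ' : (0:ℝ) < 1 - β := by linarith
  have hσ0 : (0:ℝ) < σΦ := by linarith
  set S : ℝ := ∑ i, ∫ ω, ‖x i 1 ω‖ ∂μ with hS
  have hS0 : 0 ≤ S := Finset.sum_nonneg fun k _ =>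
    integral_nonneg fun ω => norm_nonneg _
  -- integrability and first-moment bound of the stochastic subgradients
  have hgh_int : ∀ (k : Fin m) (s : ℕ), Integrable (fun ω => ‖gh k s ω‖) μ :=
    fun k s => int_norm_of_sq _ (hg2int k s)
  have hgh_le : ∀ (k : Fin m) (s : ℕ), ∫ ω, ‖gh k s ω‖ ∂μ ≤ G :=
    fun k s => int_norm_le_of_sq _ G hG (hg2int k s) (hG2 k s)
  -- iterates remain in X
  have memX : ∀ (t : ℕ), 1 ≤ t → ∀ (k : Fin m) (ω : Ω), x k t ω ∈ X := by
    intro t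
    induction t with
    | zero => intro h; omega
    | succ t ih =>
      intro _ k ω
      rcases Nat.eq_zero_or_pos t with rfl | ht
      · exact hx1 k ω
      · rw [hx k t ht ω]
        exact hXconv.sum_mem (fun l _ => hnn t k l) (hrow t k)
          (fun l _ => hzX l t ht ω)
  -- mirror step error bound
  have ebound : ∀ (s : ℕ), 1 ≤ s → ∀ (k : Fin m) (ω : Ω),
      ‖z k (s+1) ω - x k s ω‖ ≤ η s * ‖gh k s ω‖ / σΦ := by
    intro s hs k ω
    exact mirror_bound X hXconv Φ Φ' σΦ hσ0 hsc (x k s ω) (y k s ω) (z k (s+1) ω)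
      (gh k s ω) (η s) (hη s) (memX s hs k ω) (hzX k s hs ω) (hz k s hs ω) (hy k s hs ω)
  -- pointwise disagreement bound
  have key : ∀ (n : ℕ) (i : Fin m) (ω : Ω), ‖x i (n+2) ω - x j (n+2) ω‖ ≤
      2*α*β^(n+1) * (∑ k, ‖x k 1 ω‖)
      + ∑ s ∈ Icc 1 (n+1), 2*α*β^(n+2-s) * (η s / σΦ) * ∑ k, ‖gh k s ω‖ := by
    intro n i ω
    have hu := unroll_lemma A (fun k t => x k t ω) (fun k t => z k t ω)
      (fun k t ht => hx k t ht ω) n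
    have hdiff : x i (n+2) ω - x j (n+2) ω
        = (∑ k, (matProd A 1 n i k - matProd A 1 n j k) • x k 1 ω)
          + ∑ s ∈ Icc 1 (n+1), ∑ k,
              (matProd A s (n+1-s) i k - matProd A s (n+1-s) j k) • (z k (s+1) ω - x k s ω) := by
      have hi := hu i
      have hj := hu j
      rw [hi, hj]
      simp only [sub_smul, Finset.sum_sub_distrib]
      abel
    rw [hdiff]
    have hb1 : ‖∑ k, (matProd A 1 n i k - matProd A 1 n j k) • x k 1 ω‖
        ≤ 2*α*β^(n+1) * ∑ k, ‖x k 1 ω‖ := by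
      calc ‖∑ k, (matProd A 1 n i k - matProd A 1 n j k) • x k 1 ω‖
          ≤ ∑ k, ‖(matProd A 1 n i k - matProd A 1 n j k) • x k 1 ω‖ := norm_sum_le _ _
        _ ≤ ∑ k, (2*α*β^(n+1)) * ‖x k 1 ω‖ := by
            apply Finset.sum_le_sum
            intro k _
            rw [norm_smul, Real.norm_eq_abs]
            apply mul_le_mul_of_nonneg_right _ (norm_nonneg _)
            have h1 := hprod (n+1) 1 le_rfl (by omega) i k
            have h2 := hprod (n+1) 1 le_rfl (by omega) j k
            rw [show n+1-1 = n by omega] at h1 h2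
            calc |matProd A 1 n i k - matProd A 1 n j k|
                ≤ |matProd A 1 n i k - 1/(m:ℝ)| + |matProd A 1 n j k - 1/(m:ℝ)| := by
                  have h3 := abs_sub_le (matProd A 1 n i k) (1/(m:ℝ)) (matProd A 1 n j k)
                  rwa [abs_sub_comm (1/(m:ℝ))] at h3
              _ ≤ α*β^(n+1) + α*β^(n+1) := add_le_add h1 h2
              _ = 2*α*β^(n+1) := by ring
        _ = 2*α*β^(n+1) * ∑ k, ‖x k 1 ω‖ := (Finset.mul_sum _ _ _).symm
    have hb2 : ∀ s ∈ Icc 1 (n+1),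
        ‖∑ k, (matProd A s (n+1-s) i k - matProd A s (n+1-s) j k) • (z k (s+1) ω - x k s ω)‖
        ≤ 2*α*β^(n+2-s) * (η s / σΦ) * ∑ k, ‖gh k s ω‖ := by
      intro s hs
      obtain ⟨hs1, hs2⟩ := Finset.mem_Icc.1 hs
      calc ‖∑ k, (matProd A s (n+1-s) i k - matProd A s (n+1-s) j k) • (z k (s+1) ω - x k s ω)‖
          ≤ ∑ k, ‖(matProd A s (n+1-s) i k - matProd A s (n+1-s) j k) • (z k (s+1) ω - x k s ω)‖ :=
            norm_sum_le _ _
        _ ≤ ∑ k, (2*α*β^(n+2-s)) * (η s * ‖gh k s ω‖ / σΦ) := by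
            apply Finset.sum_le_sum
            intro k _
            rw [norm_smul, Real.norm_eq_abs]
            have habs : |matProd A s (n+1-s) i k - matProd A s (n+1-s) j k| ≤ 2*α*β^(n+2-s) := by
              have h1 := hprod (n+1) s hs1 hs2 i k
              have h2 := hprod (n+1) s hs1 hs2 j k
              rw [show n+1-s+1 = n+2-s by omega] at h1 h2
              calc |matProd A s (n+1-s) i k - matProd A s (n+1-s) j k|
                  ≤ |matProd A s (n+1-s) i k - 1/(m:ℝ)| + |matProd A s (n+1-s) j k - 1/(m:ℝ)| := by
                    have h3 := abs_sub_le (matProd A s (n+1-s) i k) (1/(m:ℝ)) (matProd A s (n+1-s) j k)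
                    rwa [abs_sub_comm (1/(m:ℝ))] at h3
                _ ≤ α*β^(n+2-s) + α*β^(n+2-s) := add_le_add h1 h2
                _ = 2*α*β^(n+2-s) := by ring
            apply mul_le_mul habs (ebound s hs1 k ω) (norm_nonneg _) (by positivity)
        _ = 2*α*β^(n+2-s) * (η s / σΦ) * ∑ k, ‖gh k s ω‖ := by
            rw [Finset.mul_sum]
            exact Finset.sum_congr rfl fun k _ => by ring
    calc ‖(∑ k, (matProd A 1 n i k - matProd A 1 n j k) • x k 1 ω)
          + ∑ s ∈ Icc 1 (n+1), ∑ k,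
              (matProd A s (n+1-s) i k - matProd A s (n+1-s) j k) • (z k (s+1) ω - x k s ω)‖
        ≤ ‖∑ k, (matProd A 1 n i k - matProd A 1 n j k) • x k 1 ω‖
          + ‖∑ s ∈ Icc 1 (n+1), ∑ k,
              (matProd A s (n+1-s) i k - matProd A s (n+1-s) j k) • (z k (s+1) ω - x k s ω)‖ :=
          norm_add_le _ _
      _ ≤ 2*α*β^(n+1) * (∑ k, ‖x k 1 ω‖)
          + ∑ s ∈ Icc 1 (n+1), 2*α*β^(n+2-s) * (η s / σΦ) * ∑ k, ‖gh k s ω‖ :=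
          add_le_add hb1 ((norm_sum_le _ _).trans (Finset.sum_le_sum hb2))
  -- integrated bound per time step
  have hInt : ∀ (n : ℕ) (i : Fin m), ∫ ω, ‖x i (n+2) ω - x j (n+2) ω‖ ∂μ ≤
      2*α*β^(n+1) * S + ∑ s ∈ Icc 1 (n+1), 2*α*β^(n+2-s) * (η s / σΦ) * ((m:ℝ)*G) := by
    intro n i
    have hg_int : Integrable (fun ω => 2*α*β^(n+1) * (∑ k, ‖x k 1 ω‖)
        + ∑ s ∈ Icc 1 (n+1), 2*α*β^(n+2-s) * (η s / σΦ) * ∑ k, ‖gh k s ω‖) μ := by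
      apply Integrable.add
      · exact (integrable_finset_sum _ (fun k _ => hL1 k 1)).const_mul _
      · apply integrable_finset_sum
        intro s _
        exact (integrable_finset_sum _ (fun k _ => hgh_int k s)).const_mul _
    have h1 : ∫ ω, ‖x i (n+2) ω - x j (n+2) ω‖ ∂μ
        ≤ ∫ ω, (2*α*β^(n+1) * (∑ k, ‖x k 1 ω‖)
            + ∑ s ∈ Icc 1 (n+1), 2*α*β^(n+2-s) * (η s / σΦ) * ∑ k, ‖gh k s ω‖) ∂μ :=
      integral_mono_of_nonneg (ae_of_all _ fun ω => norm_nonneg _) hg_int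
        (ae_of_all _ fun ω => key n i ω)
    refine h1.trans ?_
    rw [integral_add ((integrable_finset_sum _ (fun k _ => hL1 k 1)).const_mul _)
      (integrable_finset_sum _ fun s _ =>
        (integrable_finset_sum _ (fun k _ => hgh_int k s)).const_mul _)]
    apply add_le_add
    · rw [integral_const_mul, integral_finset_sum _ (fun k _ => hL1 k 1)]
    · rw [integral_finset_sum _ (fun s _ =>
        (integrable_finset_sum _ (fun k _ => hgh_int k s)).const_mul _)]
      apply Finset.sum_le_sum
      intro s _
      rw [integral_const_mul, integral_finset_sum _ (fun k _ => hgh_int k s)]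
      apply mul_le_mul_of_nonneg_left _
        (mul_nonneg (by positivity) (div_nonneg (le_of_lt (hη s)) (le_of_lt hσ0)))
      calc ∑ k, ∫ ω, ‖gh k s ω‖ ∂μ ≤ ∑ _k : Fin m, G := Finset.sum_le_sum fun k _ => hgh_le k s
        _ = (m:ℝ)*G := by rw [Finset.sum_const, Finset.card_univ, Fintype.card_fin, nsmul_eq_mul]
  -- bound for t = 1
  have h_t1 : ∀ i : Fin m, ∫ ω, ‖x i 1 ω - x j 1 ω‖ ∂μ ≤ S := by
    intro i
    by_cases hij : i = j
    · subst hij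
      simp only [sub_self, norm_zero, integral_zero]
      exact hS0
    · calc ∫ ω, ‖x i 1 ω - x j 1 ω‖ ∂μ
          ≤ ∫ ω, (‖x i 1 ω‖ + ‖x j 1 ω‖) ∂μ :=
            integral_mono_of_nonneg (ae_of_all _ fun ω => norm_nonneg _)
              ((hL1 i 1).add (hL1 j 1)) (ae_of_all _ fun ω => norm_sub_le _ _)
        _ = (∫ ω, ‖x i 1 ω‖ ∂μ) + ∫ ω, ‖x j 1 ω‖ ∂μ := integral_add (hL1 i 1) (hL1 j 1)
        _ = ∑ k ∈ ({i, j} : Finset (Fin m)), ∫ ω, ‖x k 1 ω‖ ∂μ := by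
            rw [Finset.sum_pair hij]
        _ ≤ S := Finset.sum_le_sum_of_subset_of_nonneg (Finset.subset_univ _)
            (fun k _ _ => integral_nonneg fun ω => norm_nonneg _)
  -- case T = 0
  rcases Nat.eq_zero_or_pos T with rfl | hT
  · rw [show Icc 1 0 = (∅ : Finset ℕ) from rfl]
    simp only [Finset.sum_empty, mul_zero, add_zero]
    have hco : (0:ℝ) ≤ 2*α*β/(1-β) + 1 := by
      have := div_nonneg (by positivity : (0:ℝ) ≤ 2*α*β) (le_of_lt hβ')
      linarith
    exact mul_nonneg (mul_nonneg (Nat.cast_nonneg m) hco) hS0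
  -- main case
  have hins : Icc 1 T = insert 1 (Icc 2 T) := by
    ext a
    simp only [Finset.mem_Icc, Finset.mem_insert]
    omega
  have h1n : (1:ℕ) ∉ Icc 2 T := by simp
  have h_rest : ∀ t ∈ Icc 2 T, ∑ i, ∫ ω, ‖x i t ω - x j t ω‖ ∂μ
      ≤ (m:ℝ) * (2*α*β^(t-1) * S + ∑ s ∈ Icc 1 (t-1), 2*α*β^(t-s) * (η s / σΦ) * ((m:ℝ)*G)) := by
    intro t ht
    obtain ⟨ht2, _⟩ := Finset.mem_Icc.1 ht
    have hbd : ∀ i : Fin m, ∫ ω, ‖x i t ω - x j t ω‖ ∂μ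
        ≤ 2*α*β^(t-1) * S + ∑ s ∈ Icc 1 (t-1), 2*α*β^(t-s) * (η s / σΦ) * ((m:ℝ)*G) := by
      intro i
      have h := hInt (t-2) i
      rw [show t-2+2 = t by omega, show t-2+1 = t-1 by omega] at h
      exact h
    calc ∑ i, ∫ ω, ‖x i t ω - x j t ω‖ ∂μ
        ≤ ∑ _i : Fin m, (2*α*β^(t-1) * S + ∑ s ∈ Icc 1 (t-1), 2*α*β^(t-s) * (η s / σΦ) * ((m:ℝ)*G)) :=
          Finset.sum_le_sum fun i _ => hbd i
      _ = (m:ℝ) * (2*α*β^(t-1) * S + ∑ s ∈ Icc 1 (t-1), 2*α*β^(t-s) * (η s / σΦ) * ((m:ℝ)*G)) := by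
          rw [Finset.sum_const, Finset.card_univ, Fintype.card_fin, nsmul_eq_mul]
  have hA : ∑ t ∈ Icc 2 T, β^(t-1) ≤ β/(1-β) := geo_lemma (le_of_lt hβ0) hβ1 1 T
  have hB : ∑ t ∈ Icc 2 T, ∑ s ∈ Icc 1 (t-1), β^(t-s) * η s
      ≤ (β/(1-β)) * ∑ s ∈ Icc 1 T, η s := by
    have h0 : ∑ t ∈ Icc 2 T, ∑ s ∈ Icc 1 (t-1), β^(t-s)*η s
        = ∑ t ∈ Icc 1 T, ∑ s ∈ Icc 1 (t-1), β^(t-s)*η s := by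
      rw [hins, Finset.sum_insert h1n]
      norm_num
    rw [h0, swap_tri]
    calc ∑ s ∈ Icc 1 T, ∑ t ∈ Icc (s+1) T, β^(t-s)*η s
        = ∑ s ∈ Icc 1 T, (∑ t ∈ Icc (s+1) T, β^(t-s)) * η s := by
          exact Finset.sum_congr rfl fun s _ => (Finset.sum_mul _ _ _).symm
      _ ≤ ∑ s ∈ Icc 1 T, (β/(1-β)) * η s :=
          Finset.sum_le_sum fun s _ =>
            mul_le_mul_of_nonneg_right (geo_lemma (le_of_lt hβ0) hβ1 s T) (le_of_lt (hη s))
      _ = (β/(1-β)) * ∑ s ∈ Icc 1 T, η s := by rw [← Finset.mul_sum]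
  -- assemble
  have hfirst : ∑ i, ∫ ω, ‖x i 1 ω - x j 1 ω‖ ∂μ ≤ (m:ℝ) * S := by
    calc ∑ i, ∫ ω, ‖x i 1 ω - x j 1 ω‖ ∂μ ≤ ∑ _i : Fin m, S := Finset.sum_le_sum fun i _ => h_t1 i
      _ = (m:ℝ) * S := by rw [Finset.sum_const, Finset.card_univ, Fintype.card_fin, nsmul_eq_mul]
  calc ∑ t ∈ Icc 1 T, ∑ i, ∫ ω, ‖x i t ω - x j t ω‖ ∂μ
      = (∑ i, ∫ ω, ‖x i 1 ω - x j 1 ω‖ ∂μ)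
        + ∑ t ∈ Icc 2 T, ∑ i, ∫ ω, ‖x i t ω - x j t ω‖ ∂μ := by
        rw [hins, Finset.sum_insert h1n]
    _ ≤ (m:ℝ) * S + ∑ t ∈ Icc 2 T,
          (m:ℝ) * (2*α*β^(t-1) * S + ∑ s ∈ Icc 1 (t-1), 2*α*β^(t-s) * (η s / σΦ) * ((m:ℝ)*G)) :=
        add_le_add hfirst (Finset.sum_le_sum h_rest)
    _ = (m:ℝ) * S + (∑ t ∈ Icc 2 T, (2*α*(m:ℝ)*S) * β^(t-1)
          + ∑ t ∈ Icc 2 T, (2*α*(m:ℝ)*(m:ℝ)*G/σΦ) * (∑ s ∈ Icc 1 (t-1), β^(t-s)*η s)) := by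
        congr 1
        rw [← Finset.sum_add_distrib]
        apply Finset.sum_congr rfl
        intro t _
        have h4 : (m:ℝ) * ∑ s ∈ Icc 1 (t-1), 2*α*β^(t-s) * (η s / σΦ) * ((m:ℝ)*G)
            = ∑ s ∈ Icc 1 (t-1), (m:ℝ) * (2*α*β^(t-s) * (η s / σΦ) * ((m:ℝ)*G)) :=
          Finset.mul_sum _ _ _
        have h5 : (2*α*(m:ℝ)*(m:ℝ)*G/σΦ) * (∑ s ∈ Icc 1 (t-1), β^(t-s)*η s)
            = ∑ s ∈ Icc 1 (t-1), (2*α*(m:ℝ)*(m:ℝ)*G/σΦ) * (β^(t-s)*η s) :=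
          Finset.mul_sum _ _ _
        rw [mul_add, h4, h5]
        congr 1
        · ring
        · exact Finset.sum_congr rfl fun s _ => by ring
    _ ≤ (m:ℝ) * S + ((2*α*(m:ℝ)*S) * (β/(1-β))
          + (2*α*(m:ℝ)*(m:ℝ)*G/σΦ) * ((β/(1-β)) * ∑ s ∈ Icc 1 T, η s)) := by
        apply add_le_add le_rfl
        apply add_le_add
        · have e1 : ∑ t ∈ Icc 2 T, (2*α*(m:ℝ)*S) * β^(t-1)
              = (2*α*(m:ℝ)*S) * ∑ t ∈ Icc 2 T, β^(t-1) := (Finset.mul_sum _ _ _).symm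
          rw [e1]
          exact mul_le_mul_of_nonneg_left hA (by positivity)
        · have e2 : ∑ t ∈ Icc 2 T, (2*α*(m:ℝ)*(m:ℝ)*G/σΦ) * (∑ s ∈ Icc 1 (t-1), β^(t-s)*η s)
              = (2*α*(m:ℝ)*(m:ℝ)*G/σΦ) * ∑ t ∈ Icc 2 T, ∑ s ∈ Icc 1 (t-1), β^(t-s)*η s :=
            (Finset.mul_sum _ _ _).symm
          rw [e2]
          refine mul_le_mul_of_nonneg_left hB ?_
          exact div_nonneg (by positivity) (le_of_lt hσ0)
    _ = (m:ℝ) * (2 * α * β / (1 - β) + 1) * S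
          + 2 * α * β * (m:ℝ) ^ 2 * G / ((1 - β) * σΦ) * ∑ t ∈ Icc 1 T, η t := by
        field_simp
        ring
end

section
/- Let A(1), A(2), … be m×m doubly stochastic matrices with nonnegative entries, and suppose there exist α > 0 and 0 < β < 1 such that the products A(t:ℓ) = A(t)A(t−1)···A(ℓ) satisfy |[A(t:ℓ)]_{ij} − 1/m| ≤ α β^{t−ℓ+1} for all i, j and t ≥ ℓ ≥ 1. Let vectors x_{i,t} ∈ ℝ^d evolve as x_{i,t+1} = Σ_{j=1}^m [A(t)]_{ij}(x_{j,t} + r_{j,t}) where the perturbations satisfy ‖r_{j,ℓ}‖₂ ≤ (G/σ_Φ) η_ℓ for all j, ℓ, with G, σ_Φ > 0 and η_ℓ ≥ 0. Then, writing x̄_t = (1/m) Σ_{i=1}^m x_{i,t}, for every i and every t ≥ 2: ‖x̄_t − x_{i,t}‖₂ ≤ α β^{t−1} Σ_{j=1}^m ‖x_{j,1}‖₂ + (α m G/σ_Φ) Σ_{ℓ=1}^{t−1} β^{t−ℓ} η_ℓ. -/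
open Finset

lemma matProd_colsum {m : ℕ} (A : ℕ → Matrix (Fin m) (Fin m) ℝ)
    (hcol : ∀ t j, ∑ i, A t i j = 1) (ℓ : ℕ) :
    ∀ n j, ∑ i, matProd A ℓ n i j = 1 := by
  intro n
  induction n with
  | zero => intro j; exact hcol ℓ j
  | succ n ih =>
    intro j
    simp only [matProd, Matrix.mul_apply]
    rw [Finset.sum_comm]
    simp only [← Finset.sum_mul, hcol, one_mul]
    exact ih j

lemma unroll {m d : ℕ} (A : ℕ → Matrix (Fin m) (Fin m) ℝ)
    (x r : Fin m → ℕ → EuclideanSpace ℝ (Fin d))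
    (hx : ∀ i, ∀ t : ℕ, 1 ≤ t → x i (t + 1) = ∑ j, A t i j • (x j t + r j t)) :
    ∀ n (i : Fin m), x i (n + 2) =
      (∑ j, matProd A 1 n i j • x j 1) +
      ∑ ℓ ∈ Icc 1 (n + 1), ∑ j, matProd A ℓ (n + 1 - ℓ) i j • r j ℓ := by
  intro n
  induction n with
  | zero =>
    intro i
    rw [hx i 1 le_rfl]
    simp [matProd, smul_add, Finset.sum_add_distrib]
  | succ n ih =>
    intro i
    have h1 : x i (n + 3) = ∑ j, A (n + 2) i j • (x j (n + 2) + r j (n + 2)) :=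
      hx i (n + 2) (by omega)
    rw [h1]
    have hrw : ∀ j : Fin m, A (n + 2) i j • (x j (n + 2) + r j (n + 2)) =
        A (n + 2) i j • ((∑ k, matProd A 1 n j k • x k 1) +
          ∑ ℓ ∈ Icc 1 (n + 1), ∑ k, matProd A ℓ (n + 1 - ℓ) j k • r k ℓ) +
        A (n + 2) i j • r j (n + 2) := by
      intro j
      rw [smul_add, ih j]
    rw [Finset.sum_congr rfl fun j _ => hrw j, Finset.sum_add_distrib]
    have part1 : ∑ j, A (n + 2) i j • ((∑ k, matProd A 1 n j k • x k 1) +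
          ∑ ℓ ∈ Icc 1 (n + 1), ∑ k, matProd A ℓ (n + 1 - ℓ) j k • r k ℓ) =
        (∑ k, matProd A 1 (n + 1) i k • x k 1) +
        ∑ ℓ ∈ Icc 1 (n + 1), ∑ k, matProd A ℓ (n + 2 - ℓ) i k • r k ℓ := by
      simp only [smul_add, Finset.sum_add_distrib, Finset.smul_sum, smul_smul]
      congr 1
      · rw [Finset.sum_comm]
        refine Finset.sum_congr rfl fun k _ => ?_
        rw [← Finset.sum_smul]
        congr 1
        show ∑ j, A (n + 2) i j * matProd A 1 n j k = matProd A 1 (n + 1) i k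
        rw [show matProd A 1 (n + 1) = A (1 + n + 1) * matProd A 1 n from rfl,
          Matrix.mul_apply, show 1 + n + 1 = n + 2 by omega]
      · rw [Finset.sum_comm]
        refine Finset.sum_congr rfl fun ℓ hℓ => ?_
        rw [Finset.sum_comm]
        refine Finset.sum_congr rfl fun k _ => ?_
        rw [← Finset.sum_smul]
        congr 1
        rw [Finset.mem_Icc] at hℓ
        have h2 : n + 2 - ℓ = (n + 1 - ℓ) + 1 := by omega
        rw [h2, show matProd A ℓ (n + 1 - ℓ + 1) =
            A (ℓ + (n + 1 - ℓ) + 1) * matProd A ℓ (n + 1 - ℓ) from rfl,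
          Matrix.mul_apply, show ℓ + (n + 1 - ℓ) + 1 = n + 2 by omega]
    rw [part1]
    have hins : Icc 1 (n + 2) = insert (n + 2) (Icc 1 (n + 1)) := by
      ext a; simp only [Finset.mem_Icc, Finset.mem_insert]; omega
    rw [show n + 1 + 1 = n + 2 from rfl, hins,
      Finset.sum_insert (by simp)]
    have hlast : ∑ k, matProd A (n + 2) (n + 2 - (n + 2)) i k • r k (n + 2) =
        ∑ j, A (n + 2) i j • r j (n + 2) := by
      simp [matProd]
    rw [hlast]
    abel

theorem stmt_4 {m d : ℕ} (hm : 0 < m)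
    (A : ℕ → Matrix (Fin m) (Fin m) ℝ)
    (hnn : ∀ t i j, 0 ≤ A t i j)
    (hrow : ∀ t i, ∑ j, A t i j = 1)
    (hcol : ∀ t j, ∑ i, A t i j = 1)
    (α β : ℝ) (hα : 0 < α) (hβ0 : 0 < β) (hβ1 : β < 1)
    (hprod : ∀ t ℓ : ℕ, 1 ≤ ℓ → ℓ ≤ t → ∀ i j,
      |matProd A ℓ (t - ℓ) i j - 1 / m| ≤ α * β ^ (t - ℓ + 1))
    (G σΦ : ℝ) (hG : 0 < G) (hσΦ : 0 < σΦ)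
    (η : ℕ → ℝ) (hη : ∀ ℓ, 0 ≤ η ℓ)
    (x r : Fin m → ℕ → EuclideanSpace ℝ (Fin d))
    (hr : ∀ (j : Fin m) (ℓ : ℕ), 1 ≤ ℓ → ‖r j ℓ‖ ≤ G / σΦ * η ℓ)
    (hx : ∀ i, ∀ t : ℕ, 1 ≤ t → x i (t + 1) = ∑ j, A t i j • (x j t + r j t)) :
    ∀ i, ∀ t : ℕ, 2 ≤ t →
      ‖(m : ℝ)⁻¹ • (∑ j, x j t) - x i t‖ ≤
        α * β ^ (t - 1) * ∑ j, ‖x j 1‖ +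
          α * m * G / σΦ * ∑ ℓ ∈ Icc 1 (t - 1), β ^ (t - ℓ) * η ℓ := by
  intro i t ht
  obtain ⟨n, rfl⟩ : ∃ n, t = n + 2 := ⟨t - 2, by omega⟩
  have hun := unroll A x r hx n
  have hcs := matProd_colsum A hcol
  rw [show n + 2 - 1 = n + 1 from rfl]
  have key : (m : ℝ)⁻¹ • (∑ j, x j (n + 2)) - x i (n + 2) =
      (∑ j, ((m : ℝ)⁻¹ - matProd A 1 n i j) • x j 1) +
      ∑ ℓ ∈ Icc 1 (n + 1), ∑ j, ((m : ℝ)⁻¹ - matProd A ℓ (n + 1 - ℓ) i j) • r j ℓ := by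
    have hsum : (∑ j, x j (n + 2)) =
        (∑ j, x j 1) + ∑ ℓ ∈ Icc 1 (n + 1), ∑ j, r j ℓ := by
      rw [Finset.sum_congr rfl fun j _ => hun j, Finset.sum_add_distrib]
      congr 1
      · rw [Finset.sum_comm]
        refine Finset.sum_congr rfl fun k _ => ?_
        rw [← Finset.sum_smul, hcs 1 n k, one_smul]
      · rw [Finset.sum_comm]
        refine Finset.sum_congr rfl fun ℓ _ => ?_
        rw [Finset.sum_comm]
        refine Finset.sum_congr rfl fun k _ => ?_
        rw [← Finset.sum_smul, hcs ℓ (n + 1 - ℓ) k, one_smul]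
    rw [hsum, hun i, smul_add, Finset.smul_sum, Finset.smul_sum]
    simp only [Finset.smul_sum, sub_smul, Finset.sum_sub_distrib]
    abel
  rw [key]
  have h1 : ‖∑ j, ((m : ℝ)⁻¹ - matProd A 1 n i j) • x j 1‖ ≤
      α * β ^ (n + 1) * ∑ j, ‖x j 1‖ := by
    calc ‖∑ j, ((m : ℝ)⁻¹ - matProd A 1 n i j) • x j 1‖
        ≤ ∑ j, ‖((m : ℝ)⁻¹ - matProd A 1 n i j) • x j 1‖ := norm_sum_le _ _
      _ ≤ ∑ j, (α * β ^ (n + 1)) * ‖x j 1‖ := by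
          refine Finset.sum_le_sum fun j _ => ?_
          rw [norm_smul, Real.norm_eq_abs, abs_sub_comm]
          refine mul_le_mul_of_nonneg_right ?_ (norm_nonneg _)
          have := hprod (n + 1) 1 le_rfl (by omega) i j
          simpa [one_div] using this
      _ = α * β ^ (n + 1) * ∑ j, ‖x j 1‖ := (Finset.mul_sum _ _ _).symm
  have h2 : ‖∑ ℓ ∈ Icc 1 (n + 1), ∑ j, ((m : ℝ)⁻¹ - matProd A ℓ (n + 1 - ℓ) i j) • r j ℓ‖ ≤
      α * m * G / σΦ * ∑ ℓ ∈ Icc 1 (n + 1), β ^ (n + 2 - ℓ) * η ℓ := by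
    calc ‖∑ ℓ ∈ Icc 1 (n + 1), ∑ j, ((m : ℝ)⁻¹ - matProd A ℓ (n + 1 - ℓ) i j) • r j ℓ‖
        ≤ ∑ ℓ ∈ Icc 1 (n + 1), ‖∑ j, ((m : ℝ)⁻¹ - matProd A ℓ (n + 1 - ℓ) i j) • r j ℓ‖ :=
          norm_sum_le _ _
      _ ≤ ∑ ℓ ∈ Icc 1 (n + 1), ∑ j, ‖((m : ℝ)⁻¹ - matProd A ℓ (n + 1 - ℓ) i j) • r j ℓ‖ :=
          Finset.sum_le_sum fun ℓ _ => norm_sum_le _ _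
      _ ≤ ∑ ℓ ∈ Icc 1 (n + 1), ∑ _j : Fin m, (α * β ^ (n + 2 - ℓ)) * (G / σΦ * η ℓ) := by
          refine Finset.sum_le_sum fun ℓ hℓ => Finset.sum_le_sum fun j _ => ?_
          rw [Finset.mem_Icc] at hℓ
          rw [norm_smul, Real.norm_eq_abs, abs_sub_comm]
          have hb := hprod (n + 1) ℓ hℓ.1 hℓ.2 i j
          rw [show n + 1 - ℓ + 1 = n + 2 - ℓ by omega] at hb
          rw [one_div] at hb
          exact mul_le_mul hb (hr j ℓ hℓ.1) (norm_nonneg _) (by positivity)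
      _ = α * m * G / σΦ * ∑ ℓ ∈ Icc 1 (n + 1), β ^ (n + 2 - ℓ) * η ℓ := by
          rw [Finset.mul_sum]
          refine Finset.sum_congr rfl fun ℓ _ => ?_
          rw [Finset.sum_const, Finset.card_univ, Fintype.card_fin, nsmul_eq_mul]
          field_simp
  calc ‖(∑ j, ((m : ℝ)⁻¹ - matProd A 1 n i j) • x j 1) +
        ∑ ℓ ∈ Icc 1 (n + 1), ∑ j, ((m : ℝ)⁻¹ - matProd A ℓ (n + 1 - ℓ) i j) • r j ℓ‖
      ≤ _ + _ := norm_add_le _ _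
    _ ≤ _ := add_le_add h1 h2
end

section
/- Let X ⊆ ℝ^d be a nonempty convex set, let Φ : ℝ^d → ℝ be differentiable and σ_Φ-strongly convex with respect to the Euclidean norm with σ_Φ ≥ 1, let w, x* ∈ X, g ∈ ℝ^d and η > 0, let y ∈ ℝ^d satisfy ∇Φ(y) = ∇Φ(w) − η g, and let z be a minimizer over X of u ↦ D_Φ(u‖y). Then ⟨g, w − x*⟩ ≤ (η/2)‖g‖₂² + (D_Φ(x*‖w) − D_Φ(x*‖z))/η. -/
open scoped RealInnerProductSpace

theorem stmt_7 {d : ℕ} (X : Set (EuclideanSpace ℝ (Fin d))) (hXne : X.Nonempty)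
    (hXconv : Convex ℝ X)
    (Φ : EuclideanSpace ℝ (Fin d) → ℝ)
    (Φ' : EuclideanSpace ℝ (Fin d) → EuclideanSpace ℝ (Fin d))
    (hΦ : ∀ u, HasGradientAt Φ (Φ' u) u)
    (σΦ : ℝ) (hσΦ : 1 ≤ σΦ)
    (hsc : ∀ u v : EuclideanSpace ℝ (Fin d),
      Φ u ≥ Φ v + ⟪Φ' v, u - v⟫ + σΦ / 2 * ‖u - v‖ ^ 2)
    (w xstar : EuclideanSpace ℝ (Fin d)) (hw : w ∈ X) (hxstar : xstar ∈ X)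
    (g : EuclideanSpace ℝ (Fin d)) (η : ℝ) (hη : 0 < η)
    (y z : EuclideanSpace ℝ (Fin d))
    (hy : Φ' y = Φ' w - η • g)
    (hzX : z ∈ X)
    (hz : IsMinOn (fun u => Φ u - Φ y - ⟪Φ' y, u - y⟫) X z) :
    ⟪g, w - xstar⟫ ≤ η / 2 * ‖g‖ ^ 2 +
      ((Φ xstar - Φ w - ⟪Φ' w, xstar - w⟫) - (Φ xstar - Φ z - ⟪Φ' z, xstar - z⟫)) / η := by
  classical
  -- First-order optimality of z
  have hopt : 0 ≤ ⟪Φ' z, xstar - z⟫ - ⟪Φ' y, xstar - z⟫ := by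
    have h1 : HasFDerivAt Φ (InnerProductSpace.toDual ℝ _ (Φ' z)) z :=
      hasGradientAt_iff_hasFDerivAt.mp (hΦ z)
    have h2 : HasFDerivAt (fun u : EuclideanSpace ℝ (Fin d) => ⟪Φ' y, u - y⟫)
        (innerSL ℝ (Φ' y)) z := by
      have h3 := (innerSL ℝ (Φ' y)).hasFDerivAt (x := z)
      have h4 := h3.sub_const ⟪Φ' y, y⟫
      simpa [inner_sub_right] using h4
    have hF : HasFDerivAt (fun u => Φ u - Φ y - ⟪Φ' y, u - y⟫)
        (InnerProductSpace.toDual ℝ _ (Φ' z) - innerSL ℝ (Φ' y)) z := by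
      exact (h1.sub_const (Φ y)).sub h2
    have hcone : xstar - z ∈ posTangentConeAt X z :=
      sub_mem_posTangentConeAt_of_segment_subset (hXconv.segment_subset hzX hxstar)
    have := hz.localize.hasFDerivWithinAt_nonneg hF.hasFDerivWithinAt hcone
    simpa [InnerProductSpace.toDual_apply_apply] using this
  have hsc_zw := hsc z w
  have hns : ‖w - z‖ = ‖z - w‖ := norm_sub_rev _ _
  have hyoung : η * ⟪g, w - z⟫ ≤ η ^ 2 / 2 * ‖g‖ ^ 2 + 1 / 2 * ‖z - w‖ ^ 2 := by
    have h := real_inner_le_norm g (w - z)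
    have h' := mul_le_mul_of_nonneg_left h hη.le
    nlinarith [sq_nonneg (η * ‖g‖ - ‖w - z‖), norm_nonneg g, norm_nonneg (w - z)]
  have hn : 1 / 2 * ‖z - w‖ ^ 2 ≤ σΦ / 2 * ‖z - w‖ ^ 2 := by
    nlinarith [sq_nonneg ‖z - w‖]
  have e1 : η * ⟪g, xstar - z⟫ = ⟪Φ' w, xstar - z⟫ - ⟪Φ' y, xstar - z⟫ := by
    rw [hy, inner_sub_left, real_inner_smul_left]; ring
  have e2 : η * ⟪g, w - xstar⟫ = η * ⟪g, w - z⟫ - η * ⟪g, xstar - z⟫ := by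
    have : ⟪g, w - xstar⟫ = ⟪g, w - z⟫ - ⟪g, xstar - z⟫ := by
      rw [← inner_sub_right]; congr 1; abel
    rw [this]; ring
  have e3 : ⟪Φ' w, xstar - z⟫ = ⟪Φ' w, xstar - w⟫ - ⟪Φ' w, z - w⟫ := by
    rw [← inner_sub_right]; congr 1; abel
  have key : η * ⟪g, w - xstar⟫ ≤ η ^ 2 / 2 * ‖g‖ ^ 2 +
      ((Φ xstar - Φ w - ⟪Φ' w, xstar - w⟫) - (Φ xstar - Φ z - ⟪Φ' z, xstar - z⟫)) := by
    linarith
  have expand : η * (η / 2 * ‖g‖ ^ 2 +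
      ((Φ xstar - Φ w - ⟪Φ' w, xstar - w⟫) - (Φ xstar - Φ z - ⟪Φ' z, xstar - z⟫)) / η)
      = η ^ 2 / 2 * ‖g‖ ^ 2 +
      ((Φ xstar - Φ w - ⟪Φ' w, xstar - w⟫) - (Φ xstar - Φ z - ⟪Φ' z, xstar - z⟫)) := by
    field_simp
  rw [← expand] at key
  exact le_of_mul_le_mul_left key hη
end
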